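/- Suppose G = (I − Q)^{-1} P where Q, P are p×p matrices (over a field, e.g. real rational functions evaluated at a generic point), diag(Q) = 0, P is diagonal and invertible. Then (Q, P) is uniquely determined by G: if (I − Q₁)^{-1}P₁ = (I − Q₂)^{-1}P₂ with both pairs satisfying diag(Qᵢ)=0 and Pᵢ diagonal invertible, then Q₁ = Q₂ and P₁ = P₂. -/

import Mathlib

/-!
Inverting `G = (1 - Q)⁻¹ * P` gives `G⁻¹ = P⁻¹ * (1 - Q)`. Since `P⁻¹` is diagonal and `1 - Q` has
unit diagonal, the diagonal of `G⁻¹` is that of `P⁻¹`; so `P⁻¹ = diagonal (diag G⁻¹)` and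
`1 - Q = P * G⁻¹` are both read off from `G`.
-/

open Matrix

namespace Matrix

variable {n R : Type*} [Fintype n] [DecidableEq n] [CommRing R]

theorem IsDiag.inv {A : Matrix n n R} (hA : A.IsDiag) : A⁻¹.IsDiag := by
  rw [← hA.diagonal_diag, inv_diagonal]
  exact isDiag_diagonal _

theorem IsDiag.diag_mul_one_sub {D Q : Matrix n n R} (hD : D.IsDiag) (hQ : ∀ i, Q i i = 0) :
    (D * (1 - Q)).diag = D.diag := by
  ext i
  rw [← hD.diagonal_diag]
  simp [hQ i]

theorem inv_one_sub_mul_inv {Q P : Matrix n n R} (hQ : IsUnit (1 - Q)) :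
    ((1 - Q)⁻¹ * P)⁻¹ = P⁻¹ * (1 - Q) := by
  rw [mul_inv_rev, nonsing_inv_nonsing_inv _ ((isUnit_iff_isUnit_det _).mp hQ)]

theorem inv_eq_diagonal_diag_inv_one_sub_mul {Q P : Matrix n n R} (hQ : ∀ i, Q i i = 0)
    (hIQ : IsUnit (1 - Q)) (hP : P.IsDiag) : P⁻¹ = diagonal ((1 - Q)⁻¹ * P)⁻¹.diag := by
  rw [inv_one_sub_mul_inv hIQ, hP.inv.diag_mul_one_sub hQ, hP.inv.diagonal_diag]

theorem one_sub_eq_mul_inv_one_sub_mul {Q P : Matrix n n R} (hIQ : IsUnit (1 - Q))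
    (hP : IsUnit P) : 1 - Q = P * ((1 - Q)⁻¹ * P)⁻¹ := by
  rw [inv_one_sub_mul_inv hIQ, ← Matrix.mul_assoc,
    mul_nonsing_inv _ ((isUnit_iff_isUnit_det _).mp hP), Matrix.one_mul]

end Matrix

/-- Identifiability of the DSF `(Q, P)` from `G = (I − Q)⁻¹P`: if
`(I − Q₁)⁻¹P₁ = (I − Q₂)⁻¹P₂` with `diag(Qᵢ) = 0`, `I − Qᵢ` invertible, and
`Pᵢ` diagonal invertible, then `Q₁ = Q₂` and `P₁ = P₂`. -/
theorem dsf_identifiability {p : ℕ} {K : Type*} [Field K]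
    (Q₁ Q₂ P₁ P₂ : Matrix (Fin p) (Fin p) K)
    (hQ₁ : ∀ i, Q₁ i i = 0) (hQ₂ : ∀ i, Q₂ i i = 0)
    (hIQ₁ : IsUnit (1 - Q₁)) (hIQ₂ : IsUnit (1 - Q₂))
    (hP₁ : P₁.IsDiag) (hP₂ : P₂.IsDiag)
    (hP₁u : IsUnit P₁) (hP₂u : IsUnit P₂)
    (hG : (1 - Q₁)⁻¹ * P₁ = (1 - Q₂)⁻¹ * P₂) :
    Q₁ = Q₂ ∧ P₁ = P₂ := by
  have hP : P₁ = P₂ := by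
    refine inv_inj ?_ ((isUnit_iff_isUnit_det _).mp hP₁u)
    rw [inv_eq_diagonal_diag_inv_one_sub_mul hQ₁ hIQ₁ hP₁,
      inv_eq_diagonal_diag_inv_one_sub_mul hQ₂ hIQ₂ hP₂, hG]
  have hIQ : 1 - Q₁ = 1 - Q₂ := by
    rw [one_sub_eq_mul_inv_one_sub_mul hIQ₁ hP₁u, one_sub_eq_mul_inv_one_sub_mul hIQ₂ hP₂u,
      hG, hP]
  exact ⟨sub_right_injective hIQ, hP⟩
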